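/- arXiv:1011.1136 — 5 statements merged into one kernel-verified Lean document; each statement's English description precedes it below -/
import Mathlib

section
/- If Y is a finite multiset of vectors in ℝ^r, η ∈ ℝ^r is nonzero, and m is the number of elements of Y not orthogonal to η, then D_η^{m+1} p_Y = 0, i.e., the polynomial p_Y is annihilated by m+1 directional derivatives in direction η. -/
/-!
`D_η` is a derivation and `D_η ⟨x, t⟩ = ⟨η, x⟩` is a constant, so `D_η` annihilates the linear
factor `⟨x, t⟩` after one step if `⟨η, x⟩ = 0` and after two steps otherwise. By the Leibniz
rule, if `D^[a+1] f = 0` and `D^[b+1] g = 0` then `D^[a+b+1] (f * g) = 0`, since each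
application of `D` to a product moves one derivative onto one of the factors; multiplying the
factors of `p_Y` one at a time gives the order `m + 1`.
-/

open MvPolynomial

/-- The linear polynomial `t ↦ ⟨x, t⟩` associated to a vector `x ∈ ℝ^r`. -/
noncomputable def linPoly {r : ℕ} (x : Fin r → ℝ) : MvPolynomial (Fin r) ℝ :=
  ∑ i, C (x i) * X i

/-- The product polynomial `p_Y = ∏_{x ∈ Y} ⟨x, t⟩` of a finite multiset of vectors. -/
noncomputable def prodPoly {r : ℕ} (Y : Multiset (Fin r → ℝ)) : MvPolynomial (Fin r) ℝ :=
  (Y.map linPoly).prod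

/-- The directional derivative `D_η = ∑ i, η i ∂/∂t_i`. -/
noncomputable def dirDeriv {r : ℕ} (η : Fin r → ℝ) (f : MvPolynomial (Fin r) ℝ) :
    MvPolynomial (Fin r) ℝ :=
  ∑ i, C (η i) * pderiv i f

namespace Derivation

variable {R A : Type*} [CommSemiring R] [CommSemiring A] [Algebra R A]

theorem iterate_mul_eq_zero (D : Derivation R A A) {m n : ℕ} {f g : A}
    (hf : D^[m + 1] f = 0) (hg : D^[n + 1] g = 0) : D^[m + n + 1] (f * g) = 0 := by
  obtain ⟨k, hk⟩ : ∃ k, m + n = k := ⟨_, rfl⟩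
  rw [hk]
  induction k generalizing m n f g with
  | zero =>
    obtain ⟨rfl, rfl⟩ : m = 0 ∧ n = 0 := by omega
    simp_all
  | succ k ih =>
    have hDf : D^[k + 1] (D f * g) = 0 := by
      cases m with
      | zero => simp_all
      | succ m => exact ih (by rwa [← Function.iterate_succ_apply]) hg (by omega)
    have hDg : D^[k + 1] (f * D g) = 0 := by
      cases n with
      | zero => simp_all
      | succ n => exact ih hf (by rwa [← Function.iterate_succ_apply]) (by omega)
    rw [Function.iterate_succ_apply, leibniz, smul_eq_mul, smul_eq_mul, mul_comm g,
      iterate_map_add, hDf, hDg, add_zero]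

end Derivation

section DirectionalDerivative

variable {r : ℕ} (η : Fin r → ℝ)

noncomputable def dirDerivation : Derivation ℝ (MvPolynomial (Fin r) ℝ) (MvPolynomial (Fin r) ℝ) :=
  ∑ i, η i • pderiv i

theorem coe_dirDerivation : ⇑(dirDerivation η) = dirDeriv η := by
  ext1 f
  rw [dirDerivation, ← Derivation.coeFnAddMonoidHom_apply, map_sum]
  simp [dirDeriv, smul_eq_C_mul]

theorem dirDeriv_linPoly (x : Fin r → ℝ) : dirDeriv η (linPoly x) = C (∑ i, η i * x i) := by
  simp [dirDeriv, linPoly, pderiv_X, Pi.single_apply, mul_comm]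

theorem iterate_dirDeriv_two_linPoly (x : Fin r → ℝ) : (dirDeriv η)^[2] (linPoly x) = 0 := by
  rw [Function.iterate_succ_apply', Function.iterate_one, dirDeriv_linPoly]
  simp [dirDeriv]

end DirectionalDerivative

theorem prodPoly_cons {r : ℕ} (x : Fin r → ℝ) (Y : Multiset (Fin r → ℝ)) :
    prodPoly (x ::ₘ Y) = linPoly x * prodPoly Y := by
  simp [prodPoly]

open Classical in
theorem dirDeriv_pow_annihilates_general {r : ℕ} (Y : Multiset (Fin r → ℝ)) (η : Fin r → ℝ) :
    (dirDeriv η)^[(Y.filter fun x => (∑ i, η i * x i) ≠ 0).card + 1] (prodPoly Y) = 0 := by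
  rw [← coe_dirDerivation]
  induction Y using Multiset.induction with
  | empty => simp [prodPoly]
  | cons x Y ih =>
    rw [prodPoly_cons]
    by_cases hx : ∑ i, η i * x i = 0
    · rw [Multiset.filter_cons_of_neg _ (by simpa using hx)]
      have hlin : (dirDerivation η)^[0 + 1] (linPoly x) = 0 := by
        simp [coe_dirDerivation, dirDeriv_linPoly, hx]
      simpa using (dirDerivation η).iterate_mul_eq_zero hlin ih
    · rw [Multiset.filter_cons_of_pos _ (by exact hx), Multiset.card_cons]
      have hlin : (dirDerivation η)^[1 + 1] (linPoly x) = 0 := by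
        rw [coe_dirDerivation, iterate_dirDeriv_two_linPoly]
      simpa [add_comm 1] using (dirDerivation η).iterate_mul_eq_zero hlin ih

open Classical in
/-- If `m` is the number of elements of `Y` not orthogonal to `η ≠ 0`, then
`D_η^{m+1} p_Y = 0`. -/
theorem dirDeriv_pow_annihilates {r : ℕ} (Y : Multiset (Fin r → ℝ)) (η : Fin r → ℝ)
    (hη : η ≠ 0) :
    (dirDeriv η)^[(Y.filter fun x => (∑ i, η i * x i) ≠ 0).card + 1] (prodPoly Y) = 0 :=
  dirDeriv_pow_annihilates_general Y η
end

section
/- Let X = (x_1,...,x_r) be a basis of ℝ^r with dual basis (y_1,...,y_r). Then the ideal generated by all powers (Σ_{i∈I} α_i D_{y_i})^{|I|+k+1} over all subsets I ⊆ [r] and all choices of nonzero scalars α_i equals the ideal generated by the monomials ∏_{i∈I} D_{y_i}^{a_i+1} over all I ⊆ [r] and a_i ∈ ℕ with Σ_{i∈I} a_i = k+1. -/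
open Finset

noncomputable def Ssum (c d : ℕ) : ℤ :=
  ∑ j ∈ Finset.range (c + 1), (-1 : ℤ) ^ (c - j) * (c.choose j) * (j : ℤ) ^ d

lemma Ssum_key (c e : ℕ) :
    Ssum (c + 1) (e + 1) = (c + 1) * ∑ f ∈ Finset.range (e + 1), (e.choose f) * Ssum c f := by
  have h1 : Ssum (c + 1) (e + 1)
      = ∑ i ∈ Finset.range (c + 1),
          (-1 : ℤ) ^ (c - i) * ((c+1).choose (i+1)) * ((i:ℤ) + 1) ^ (e + 1) := by
    rw [Ssum, Finset.sum_range_succ']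
    simp
  rw [h1]
  have h2 : ∀ i ∈ Finset.range (c + 1),
      (-1 : ℤ) ^ (c - i) * ((c+1).choose (i+1)) * ((i:ℤ) + 1) ^ (e + 1)
      = ∑ f ∈ Finset.range (e + 1),
          (c + 1) * ((e.choose f) * ((-1 : ℤ) ^ (c - i) * (c.choose i) * (i:ℤ) ^ f)) := by
    intro i _
    have hnat : ((c+1) * c.choose i : ℕ) = ((c+1).choose (i+1) * (i+1) : ℕ) :=
      Nat.add_one_mul_choose_eq c i
    have hc : ((c+1).choose (i+1) : ℤ) * ((i:ℤ) + 1) = ((c:ℤ) + 1) * (c.choose i) := by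
      exact_mod_cast hnat.symm
    have hpow : ((i:ℤ) + 1) ^ (e + 1) = ((i:ℤ) + 1) * ∑ f ∈ Finset.range (e + 1),
        (e.choose f) * (i:ℤ) ^ f := by
      have he : ((i:ℤ) + 1) ^ e = ∑ f ∈ Finset.range (e + 1), (e.choose f) * (i:ℤ) ^ f := by
        rw [add_pow]
        exact Finset.sum_congr rfl fun f _ => by ring
      rw [pow_succ, he]
      ring
    rw [hpow, Finset.mul_sum, Finset.mul_sum]
    apply Finset.sum_congr rfl
    intro f _
    linear_combination ((-1 : ℤ) ^ (c - i) * (e.choose f) * (i:ℤ) ^ f) * hc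
  rw [Finset.sum_congr rfl h2, Finset.sum_comm, Finset.mul_sum]
  apply Finset.sum_congr rfl
  intro f _
  rw [Ssum, Finset.mul_sum, Finset.mul_sum]

lemma Ssum_spec : ∀ c d : ℕ, (d < c → Ssum c d = 0) ∧ Ssum c c = (c.factorial : ℤ) := by
  intro c
  induction c with
  | zero =>
    refine fun d => ⟨fun h => absurd h (Nat.not_lt_zero d), ?_⟩
    simp [Ssum]
  | succ c ih =>
    intro d
    constructor
    · intro hd
      match d with
      | 0 =>
        have : Ssum (c+1) 0 = (-1 : ℤ)^(c+1) *
            ∑ j ∈ Finset.range (c + 2), (-1 : ℤ) ^ j * ((c+1).choose j) := by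
          rw [Ssum, Finset.mul_sum]
          apply Finset.sum_congr rfl
          intro j hj
          rw [Finset.mem_range] at hj
          have hj' : j ≤ c + 1 := by omega
          have : (-1 : ℤ) ^ (c + 1 - j) * (-1 : ℤ) ^ j = (-1 : ℤ) ^ (c + 1) := by
            rw [← pow_add, Nat.sub_add_cancel hj']
          have hsq : ((-1 : ℤ) ^ j) * ((-1 : ℤ) ^ j) = 1 := by
            rw [← pow_add]; exact Even.neg_one_pow ⟨j, rfl⟩
          calc (-1 : ℤ) ^ (c + 1 - j) * ((c+1).choose j) * (j : ℤ) ^ 0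
              = ((-1 : ℤ) ^ (c + 1 - j) * (-1 : ℤ) ^ j) * ((-1 : ℤ) ^ j * ((c+1).choose j)) := by
                rw [pow_zero]
                linear_combination (-(-1:ℤ)^(c+1-j) * (((c+1).choose j : ℤ))) * hsq
            _ = (-1 : ℤ) ^ (c + 1) * ((-1 : ℤ) ^ j * ((c+1).choose j)) := by rw [this]
        rw [this, Int.alternating_sum_range_choose_of_ne (Nat.succ_ne_zero c), mul_zero]
      | (e+1) =>
        rw [Ssum_key]
        have : ∀ f ∈ Finset.range (e + 1), ((e.choose f : ℤ)) * Ssum c f = 0 := by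
          intro f hf
          rw [Finset.mem_range] at hf
          rw [(ih f).1 (by omega), mul_zero]
        rw [Finset.sum_congr rfl this, Finset.sum_const_zero, mul_zero]
    · rw [Ssum_key, Finset.sum_range_succ]
      have : ∀ f ∈ Finset.range c, ((c.choose f : ℤ)) * Ssum c f = 0 := by
        intro f hf
        rw [Finset.mem_range] at hf
        rw [(ih f).1 hf, mul_zero]
      rw [Finset.sum_congr rfl this, Finset.sum_const_zero, zero_add, Nat.choose_self,
        (ih c).2, Nat.factorial_succ]
      push_cast
      ring

lemma polarization {ι : Type*} [Fintype ι] [DecidableEq ι] {A : Type*} [CommRing A]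
    (x : ι → A) (c : ι → ℕ) :
    ∑ j ∈ Fintype.piFinset (fun i => Finset.range (c i + 1)),
      (((∏ i, (-1:ℤ)^(c i - j i) * ((c i).choose (j i))) : ℤ) : A) *
        (∑ i, (j i : A) * x i) ^ (∑ i, c i)
    = ((∑ i, c i).factorial : A) * ∏ i, x i ^ c i := by
  set n := ∑ i, c i with hn
  have expand : ∀ j : ι → ℕ, (∑ i, (j i : A) * x i) ^ n
      = ∑ d ∈ Finset.piAntidiag Finset.univ n,
          (Nat.multinomial Finset.univ d : A) * ((∏ i, (j i : A) ^ d i) * ∏ i, x i ^ d i) := by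
    intro j
    rw [Finset.sum_pow_eq_sum_piAntidiag]
    apply Finset.sum_congr rfl
    intro d _
    rw [← Finset.prod_mul_distrib]
    simp_rw [mul_pow]
  simp_rw [expand, Finset.mul_sum]
  rw [Finset.sum_comm]
  have inner : ∀ d : ι → ℕ,
      (∑ j ∈ Fintype.piFinset (fun i => Finset.range (c i + 1)),
        (((∏ i, (-1:ℤ)^(c i - j i) * ((c i).choose (j i))) : ℤ) : A) *
          ((Nat.multinomial Finset.univ d : A) * ((∏ i, (j i : A) ^ d i) * ∏ i, x i ^ d i)))
      = (Nat.multinomial Finset.univ d : A) * (∏ i, ((Ssum (c i) (d i) : ℤ) : A))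
          * ∏ i, x i ^ d i := by
    intro d
    have : ∀ j ∈ Fintype.piFinset (fun i => Finset.range (c i + 1)),
        (((∏ i, (-1:ℤ)^(c i - j i) * ((c i).choose (j i))) : ℤ) : A) *
          ((Nat.multinomial Finset.univ d : A) * ((∏ i, (j i : A) ^ d i) * ∏ i, x i ^ d i))
        = (Nat.multinomial Finset.univ d : A) *
            (∏ i, (((-1:ℤ)^(c i - j i) * ((c i).choose (j i)) : ℤ) : A) * (j i : A) ^ d i)
            * ∏ i, x i ^ d i := by
      intro j _
      push_cast
      rw [Finset.prod_mul_distrib, Finset.prod_mul_distrib, Finset.prod_mul_distrib]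
      ring
    have hps : (∏ i, ∑ jv ∈ Finset.range (c i + 1),
          (((-1:ℤ)^(c i - jv) * ((c i).choose jv) : ℤ) : A) * (jv : A) ^ d i)
        = ∑ j ∈ Fintype.piFinset (fun i => Finset.range (c i + 1)),
            ∏ i, (((-1:ℤ)^(c i - j i) * ((c i).choose (j i)) : ℤ) : A) * (j i : A) ^ d i :=
      Finset.prod_univ_sum _ _
    rw [Finset.sum_congr rfl this, ← Finset.sum_mul, ← Finset.mul_sum, ← hps]
    congr 2
    apply Finset.prod_congr rfl
    intro i _
    rw [Ssum]
    push_cast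
    rfl
  simp_rw [inner]
  rw [Finset.sum_eq_single c]
  · have h1 : ∀ i : ι, ((Ssum (c i) (c i) : ℤ) : A) = ((c i).factorial : A) := by
      intro i; rw [(Ssum_spec (c i) (c i)).2]; push_cast; rfl
    simp_rw [h1]
    rw [← Nat.cast_prod, ← Nat.cast_mul, mul_comm (Nat.multinomial _ _),
      Nat.multinomial_spec]
  · intro d hd hdc
    rw [Finset.mem_piAntidiag] at hd
    have hex : ∃ i, d i < c i := by
      by_contra hno
      push_neg at hno
      apply hdc
      funext i
      have hle : ∀ i ∈ Finset.univ, c i ≤ d i := fun i _ => hno i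
      have := (Finset.sum_eq_sum_iff_of_le hle).mp (hn ▸ hd.1.symm) i (Finset.mem_univ i)
      omega
    obtain ⟨i, hi⟩ := hex
    have : ((Ssum (c i) (d i) : ℤ) : A) = 0 := by
      rw [(Ssum_spec (c i) (d i)).1 hi, Int.cast_zero]
    rw [Finset.prod_eq_zero (Finset.mem_univ i) this, mul_zero, zero_mul]
  · intro hc
    exfalso
    apply hc
    rw [Finset.mem_piAntidiag]
    exact ⟨hn.symm, fun i _ => Finset.mem_univ i⟩

lemma exists_bounded_sum {ι : Type*} [DecidableEq ι] : ∀ (s : Finset ι) (w : ι → ℕ) (m : ℕ),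
    m ≤ ∑ i ∈ s, w i → ∃ a : ι → ℕ, (∀ i ∈ s, a i ≤ w i) ∧ ∑ i ∈ s, a i = m := by
  intro s
  induction s using Finset.cons_induction with
  | empty =>
    intro w m hm
    simp only [Finset.sum_empty, Nat.le_zero] at hm
    exact ⟨fun _ => 0, by simp, by simp [hm]⟩
  | cons i s hi ih =>
    intro w m hm
    rw [Finset.sum_cons] at hm
    obtain ⟨a, ha1, ha2⟩ := ih w (m - min m (w i)) (by omega)
    refine ⟨Function.update a i (min m (w i)), fun j hj => ?_, ?_⟩
    · rcases Finset.mem_cons.mp hj with h | h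
      · subst h; rw [Function.update_self]; omega
      · rw [Function.update_of_ne (by rintro rfl; exact hi h)]
        exact ha1 j h
    · rw [Finset.sum_cons, Function.update_self]
      have : ∀ j ∈ s, Function.update a i (min m (w i)) j = a j := by
        intro j hj
        rw [Function.update_of_ne (by rintro rfl; exact hi hj)]
      rw [Finset.sum_congr rfl this, ha2]
      omega



open MvPolynomial

/-- For a basis `(x_1,...,x_r)` with dual basis `(y_1,...,y_r)` (so that `D_i` is the variable
corresponding to `y_i`), the ideal generated by the powers `(∑_{i∈I} α_i D_i)^{|I|+k+1}`,
over all `I ⊆ [r]` and nonzero scalars `α_i`, equals the monomial ideal generated by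
`∏_{i∈I} D_i^{a_i+1}` with `∑_{i∈I} a_i = k+1`. -/
theorem power_ideal_eq_monomial_ideal (K : Type*) [Field K] [CharZero K]
    (r : ℕ) (k : ℤ) (hk : -1 ≤ k) :
    Ideal.span {g : MvPolynomial (Fin r) K | ∃ I : Finset (Fin r), ∃ α : Fin r → K,
        (∀ i ∈ I, α i ≠ 0) ∧
        g = (∑ i ∈ I, C (α i) * X i) ^ (I.card + (k + 1).toNat)} =
      Ideal.span {g : MvPolynomial (Fin r) K | ∃ I : Finset (Fin r), ∃ a : Fin r → ℕ,
        (∑ i ∈ I, (a i : ℤ)) = k + 1 ∧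
        g = ∏ i ∈ I, X i ^ (a i + 1)} := by
  set m : ℕ := (k + 1).toNat with hmdef
  have hm : (m : ℤ) = k + 1 := Int.toNat_of_nonneg (by omega)
  set PS : Set (MvPolynomial (Fin r) K) := {g | ∃ I : Finset (Fin r), ∃ α : Fin r → K,
      (∀ i ∈ I, α i ≠ 0) ∧ g = (∑ i ∈ I, C (α i) * X i) ^ (I.card + m)} with hPS
  set MS : Set (MvPolynomial (Fin r) K) := {g | ∃ I : Finset (Fin r), ∃ a : Fin r → ℕ,
      (∑ i ∈ I, (a i : ℤ)) = k + 1 ∧ g = ∏ i ∈ I, X i ^ (a i + 1)} with hMS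
  -- every monomial ∏_{i∈I} X_i^{d_i} with ∑ d = |I| + m lies in the monomial ideal
  have mono_mem : ∀ (I : Finset (Fin r)) (d : Fin r → ℕ),
      (∑ i ∈ I, d i) = I.card + m →
      (∏ i ∈ I, X i ^ d i : MvPolynomial (Fin r) K) ∈ Ideal.span MS := by
    intro I d hd
    classical
    set J : Finset (Fin r) := I.filter (fun i => d i ≠ 0) with hJ
    have hJsub : J ⊆ I := Finset.filter_subset _ _
    have hJsum : ∑ i ∈ J, d i = ∑ i ∈ I, d i := Finset.sum_filter_ne_zero I
    have hJpos : ∀ i ∈ J, 1 ≤ d i := by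
      intro i hi
      have := (Finset.mem_filter.mp hi).2
      omega
    have hcard : J.card ≤ I.card := Finset.card_le_card hJsub
    have hsum1 : ∑ i ∈ J, (d i - 1) + J.card = ∑ i ∈ J, d i := by
      rw [Finset.card_eq_sum_ones, ← Finset.sum_add_distrib]
      exact Finset.sum_congr rfl fun i hi => by have := hJpos i hi; omega
    have hmle : m ≤ ∑ i ∈ J, (d i - 1) := by omega
    obtain ⟨a, ha1, ha2⟩ := exists_bounded_sum J (fun i => d i - 1) m hmle
    have hgen : (∏ i ∈ J, X i ^ (a i + 1) : MvPolynomial (Fin r) K) ∈ MS := by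
      refine ⟨J, a, ?_, rfl⟩
      rw [← hm]
      exact_mod_cast ha2
    have hfac : (∏ i ∈ I, X i ^ d i : MvPolynomial (Fin r) K)
        = (∏ i ∈ J, X i ^ (a i + 1)) *
          ((∏ i ∈ J, X i ^ (d i - (a i + 1))) * ∏ i ∈ I \ J, X i ^ d i) := by
      rw [← Finset.prod_sdiff hJsub]
      have hx : ∀ i ∈ J, (X i : MvPolynomial (Fin r) K) ^ d i
          = X i ^ (a i + 1) * X i ^ (d i - (a i + 1)) := by
        intro i hi
        rw [← pow_add]
        congr 1
        have h1 := hJpos i hi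
        have h2 := ha1 i hi
        omega
      rw [Finset.prod_congr rfl hx, Finset.prod_mul_distrib]
      ring
    rw [hfac]
    exact Ideal.mul_mem_right _ _ (Ideal.subset_span hgen)
  -- every relevant power of a general (possibly degenerate) linear form lies in the power ideal
  have pow_mem : ∀ (t : Fin r → K) (I : Finset (Fin r)) (n : ℕ), I.card + m ≤ n →
      ((∑ i ∈ I, C (t i) * X i : MvPolynomial (Fin r) K) ^ n) ∈ Ideal.span PS := by
    intro t I n hn
    classical
    set J : Finset (Fin r) := I.filter (fun i => t i ≠ 0) with hJ
    have hJs : (∑ i ∈ I, C (t i) * X i : MvPolynomial (Fin r) K)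
        = ∑ i ∈ J, C (t i) * X i := by
      rw [hJ]
      refine (Finset.sum_filter_of_ne ?_).symm
      intro i hi hne
      intro h0
      apply hne
      rw [h0, map_zero, zero_mul]
    have hcard : J.card ≤ I.card := Finset.card_le_card (Finset.filter_subset _ _)
    have hgen : ((∑ i ∈ J, C (t i) * X i : MvPolynomial (Fin r) K) ^ (J.card + m)) ∈ PS :=
      ⟨J, t, fun i hi => (Finset.mem_filter.mp hi).2, rfl⟩
    rw [hJs, show n = (J.card + m) + (n - (J.card + m)) by omega, pow_add]
    exact Ideal.mul_mem_right _ _ (Ideal.subset_span hgen)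
  apply le_antisymm
  · -- power ideal ≤ monomial ideal
    rw [Ideal.span_le]
    rintro g ⟨I, α, hα, rfl⟩
    rw [Finset.sum_pow_eq_sum_piAntidiag]
    apply Ideal.sum_mem
    intro d hd
    rw [Finset.mem_piAntidiag] at hd
    have : ∀ i ∈ I, (C (α i) * X i : MvPolynomial (Fin r) K) ^ d i
        = C (α i ^ d i) * X i ^ d i := by
      intro i _
      rw [mul_pow, map_pow]
    rw [Finset.prod_congr rfl this, Finset.prod_mul_distrib, ← map_prod]
    exact Ideal.mul_mem_left _ _ (Ideal.mul_mem_left _ _ (mono_mem I d hd.1))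
  · -- monomial ideal ≤ power ideal
    rw [Ideal.span_le]
    rintro g ⟨I, a, hsum, rfl⟩
    classical
    have hsum' : ∑ i ∈ I, a i = m := by
      have : ((∑ i ∈ I, a i : ℕ) : ℤ) = (m : ℤ) := by push_cast; rw [hm]; exact hsum
      exact_mod_cast this
    have hpol := polarization (ι := {i // i ∈ I}) (A := MvPolynomial (Fin r) K)
      (fun i => X i.1) (fun i => a i.1 + 1)
    set n : ℕ := ∑ i : {i // i ∈ I}, (a i.1 + 1) with hndef
    have hn : n = I.card + m := by
      rw [hndef, Finset.sum_coe_sort I (fun i => a i + 1), Finset.sum_add_distrib,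
        hsum']
      simp [add_comm]
    have hprod : (∏ i : {i // i ∈ I}, (X i.1 : MvPolynomial (Fin r) K) ^ (a i.1 + 1))
        = ∏ i ∈ I, X i ^ (a i + 1) := Finset.prod_coe_sort I (fun i => X i ^ (a i + 1))
    rw [hprod] at hpol
    -- each term of the polarization sum lies in the power ideal
    have hterm : ∀ j : {i // i ∈ I} → ℕ,
        ((∑ i : {i // i ∈ I}, ((j i : MvPolynomial (Fin r) K)) * X i.1) ^ n)
          ∈ Ideal.span PS := by
      intro j
      set t : Fin r → K := fun i0 => if h : i0 ∈ I then (j ⟨i0, h⟩ : K) else 0 with ht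
      have : (∑ i : {i // i ∈ I}, ((j i : MvPolynomial (Fin r) K)) * X i.1)
          = ∑ i ∈ I, C (t i) * X i := by
        rw [← Finset.sum_coe_sort I (fun i => C (t i) * X i)]
        apply Finset.sum_congr rfl
        intro i _
        rw [ht]
        simp only [i.2, dif_pos]
        norm_cast
      rw [this]
      exact pow_mem t I n (by omega)
    have hmem : ((n.factorial : MvPolynomial (Fin r) K) * ∏ i ∈ I, X i ^ (a i + 1))
        ∈ Ideal.span PS := by
      rw [← hpol]
      apply Ideal.sum_mem
      intro j _
      exact Ideal.mul_mem_left _ _ (hterm j)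
    have hfac : ((n.factorial : K) ≠ 0) := Nat.cast_ne_zero.mpr (Nat.factorial_ne_zero n)
    have : (∏ i ∈ I, X i ^ (a i + 1) : MvPolynomial (Fin r) K)
        = C ((n.factorial : K)⁻¹) *
          ((n.factorial : MvPolynomial (Fin r) K) * ∏ i ∈ I, X i ^ (a i + 1)) := by
      rw [← mul_assoc]
      have : (n.factorial : MvPolynomial (Fin r) K) = C ((n.factorial : K)) := by
        rfl
      rw [this, ← map_mul, inv_mul_cancel₀ hfac, map_one, one_mul]
    rw [this]
    exact Ideal.mul_mem_left _ _ hmem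
end

section
/- Let I ⊆ K[D_1,...,D_r] be the monomial ideal generated by {∏_{i∈I'} D_i^{a_i+1} : I' ⊆ [r], Σ_{i∈I'} a_i = k+1} for an integer k ≥ 0. Then its kernel in K[t_1,...,t_r] is spanned by the monomials ∏_{i∈I'} t_i^{a_i+1} with I' ⊆ [r], a_i ∈ ℕ, and Σ_{i∈I'} a_i ≤ k. -/
open MvPolynomial

variable {σ K : Type*} [Field K]

/-- The partial derivative `∂/∂t_i` as a linear endomorphism of the polynomial ring. -/
noncomputable def pdEnd (i : σ) : Module.End K (MvPolynomial σ K) :=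
  (pderiv i).toLinearMap

/-- Apply a polynomial `g` as a constant-coefficient differential operator
(`D_i ↦ ∂/∂t_i`) to a polynomial `f`. -/
noncomputable def applyOp (g f : MvPolynomial σ K) : MvPolynomial σ K :=
  ∑ d ∈ g.support, g.coeff d • ((d.support.toList.map fun i => pdEnd i ^ d i).prod f)

/-- The kernel (inverse system) of an ideal `I`: all polynomials annihilated by every
element of `I` acting as a differential operator. -/
def kernelOf (I : Ideal (MvPolynomial σ K)) : Set (MvPolynomial σ K) :=
  {f | ∀ g ∈ I, applyOp g f = 0}

/-! A monomial operator `∂^d` sends `t^e` to `(∏ᵢ e_i!/(e_i-d_i)!) t^(e-d)`, which in characteristic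
zero vanishes exactly when `d ≰ e`. Comparing coefficients, the kernel of any monomial ideal is
therefore spanned by the monomials divisible by none of its generators. Here the generators are the
`t^e` with excess degree `∑_{e_i ≠ 0} (e_i - 1) = k + 1`; the excess degree is monotone and, below a
given `m`, takes every value up to that of `m`, so `t^m` is divisible by no generator exactly when
its excess degree is at most `k`, i.e. when `t^m` is one of the spanning monomials. -/

noncomputable def diffOp (d : σ →₀ ℕ) : Module.End K (MvPolynomial σ K) :=
  (d.support.toList.map fun i => pdEnd i ^ d i).prod

lemma pdEnd_pow_monomial (i : σ) (n : ℕ) (e : σ →₀ ℕ) (c : K) :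
    (pdEnd i ^ n) (monomial e c) =
      monomial (e - Finsupp.single i n) (c * (e i).descFactorial n) := by
  induction n generalizing e c with
  | zero => simp
  | succ n ih =>
    rw [pow_succ, Module.End.mul_apply, pdEnd, Derivation.coeFn_coe, pderiv_monomial, ← pdEnd, ih,
      tsub_tsub, ← Finsupp.single_add, add_comm 1 n, Finsupp.tsub_apply, Finsupp.single_eq_same,
      mul_assoc, ← Nat.cast_mul]
    congr 3
    rcases e i with _ | m
    · simp
    · rw [Nat.add_sub_cancel, Nat.succ_descFactorial_succ]

lemma list_sum_single_apply_of_notMem {l : List σ} {i : σ} (hi : i ∉ l) (n : σ → ℕ) :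
    (l.map fun j => Finsupp.single j (n j)).sum i = 0 := by
  rw [← Finsupp.applyAddHom_apply, map_list_sum, List.map_map]
  exact List.sum_eq_zero fun x hx => by
    obtain ⟨j, hj, rfl⟩ := List.mem_map.mp hx
    exact Finsupp.single_eq_of_ne (by rintro rfl; exact hi hj)

lemma list_prod_pdEnd_pow_monomial (l : List σ) (hl : l.Nodup) (n : σ → ℕ) (e : σ →₀ ℕ)
    (c : K) :
    (l.map fun i => pdEnd i ^ n i).prod (monomial e c) =
      monomial (e - (l.map fun i => Finsupp.single i (n i)).sum)
        (c * (l.map fun i => (e i).descFactorial (n i)).prod) := by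
  induction l generalizing e c with
  | nil => simp
  | cons i t ih =>
    obtain ⟨hit, ht⟩ := List.nodup_cons.mp hl
    simp only [List.map_cons, List.prod_cons, List.sum_cons, Module.End.mul_apply, ih ht,
      pdEnd_pow_monomial, tsub_tsub, Finsupp.tsub_apply, list_sum_single_apply_of_notMem hit,
      Nat.sub_zero, add_comm]
    congr 1
    push_cast
    ring

lemma diffOp_monomial (d e : σ →₀ ℕ) (c : K) :
    diffOp d (monomial e c) =
      monomial (e - d) (c * ∏ i ∈ d.support, (e i).descFactorial (d i)) := by
  rw [diffOp, list_prod_pdEnd_pow_monomial _ d.support.nodup_toList, Finset.sum_map_toList,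
    Finset.prod_map_toList, show ∑ i ∈ d.support, Finsupp.single i (d i) = d from d.sum_single]

lemma prod_descFactorial_ne_zero_iff (d e : σ →₀ ℕ) :
    ∏ i ∈ d.support, (e i).descFactorial (d i) ≠ 0 ↔ d ≤ e := by
  simp only [Finset.prod_ne_zero_iff, ne_eq, Nat.descFactorial_eq_zero_iff_lt, not_lt,
    Finsupp.le_def]
  refine ⟨fun h i => ?_, fun h i _ => h i⟩
  by_cases hi : i ∈ d.support
  · exact h i hi
  · simp [Finsupp.notMem_support_iff.mp hi]

lemma diffOp_monomial_of_not_le {d e : σ →₀ ℕ} (h : ¬d ≤ e) (c : K) :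
    diffOp d (monomial e c) = 0 := by
  rw [diffOp_monomial, not_ne_iff.mp (mt (prod_descFactorial_ne_zero_iff d e).mp h)]
  simp

lemma coeff_diffOp (d n : σ →₀ ℕ) (f : MvPolynomial σ K) :
    coeff n (diffOp d f) =
      coeff (n + d) f * ∏ i ∈ d.support, ((n + d) i).descFactorial (d i) := by
  classical
  induction f using MvPolynomial.induction_on' with
  | monomial e c =>
    by_cases hde : d ≤ e
    · simp only [diffOp_monomial, coeff_monomial, tsub_eq_iff_eq_add_of_le hde]
      split_ifs with h <;> simp [h]
    · rw [diffOp_monomial_of_not_le hde, coeff_monomial, if_neg, coeff_zero, zero_mul]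
      rintro rfl
      exact hde le_add_self
  | add p q hp hq => rw [map_add, coeff_add, hp, hq, coeff_add, add_mul]

lemma applyOp_eq_sum (g f : MvPolynomial σ K) :
    applyOp g f = ∑ d ∈ g.support, g.coeff d • diffOp d f := rfl

lemma applyOp_monomial_one (e : σ →₀ ℕ) (f : MvPolynomial σ K) :
    applyOp (monomial e (1 : K)) f = diffOp e f := by
  classical
  simp [applyOp_eq_sum, support_monomial]

theorem kernelOf_span_monomial [CharZero K] (E : Set (σ →₀ ℕ)) :
    kernelOf (Ideal.span ((fun e => monomial e (1 : K)) '' E)) =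
      Submodule.span K ((fun m => monomial m (1 : K)) '' {m | ∀ e ∈ E, ¬e ≤ m}) := by
  ext f
  constructor
  · intro hf
    have standard : ∀ m ∈ f.support, ∀ e ∈ E, ¬e ≤ m := by
      intro m hm e he hem
      have hzero := congrArg (coeff (m - e))
        (applyOp_monomial_one e f ▸ hf _ (Ideal.subset_span ⟨e, he, rfl⟩))
      rw [coeff_diffOp, tsub_add_cancel_of_le hem, coeff_zero] at hzero
      exact mul_ne_zero (mem_support_iff.mp hm)
        (Nat.cast_ne_zero.mpr ((prod_descFactorial_ne_zero_iff e m).mpr hem)) hzero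
    rw [SetLike.mem_coe, f.as_sum]
    refine Submodule.sum_mem _ fun m hm => ?_
    rw [← mul_one (coeff m f), ← smul_eq_mul, ← smul_monomial]
    exact Submodule.smul_mem _ _ (Submodule.subset_span ⟨m, standard m hm, rfl⟩)
  · intro hf g hg
    rw [applyOp_eq_sum]
    refine Finset.sum_eq_zero fun d hd => ?_
    obtain ⟨e, he, hed⟩ := mem_ideal_span_monomial_image.mp hg d hd
    suffices Submodule.span K ((fun m => monomial m (1 : K)) '' {m | ∀ e ∈ E, ¬e ≤ m}) ≤
        LinearMap.ker (diffOp d) by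
      rw [LinearMap.mem_ker.mp (this hf), smul_zero]
    rw [Submodule.span_le]
    rintro _ ⟨m, hm, rfl⟩
    exact diffOp_monomial_of_not_le (fun hdm => hm e he (hed.trans hdm)) 1

def excessDegree (m : σ →₀ ℕ) : ℕ := ∑ i ∈ m.support, (m i - 1)

lemma excessDegree_mono : Monotone (excessDegree (σ := σ)) := fun _ _ hem =>
  (Finset.sum_le_sum fun i _ => Nat.sub_le_sub_right (hem i) 1).trans
    (Finset.sum_le_sum_of_subset (Finsupp.support_mono hem))

lemma finsetSum_single_apply [DecidableEq σ] (s : Finset σ) (b : σ → ℕ) (j : σ) :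
    (∑ i ∈ s, Finsupp.single i (b i)) j = if j ∈ s then b j else 0 := by
  rw [Finsupp.finsetSum_apply]
  simp_rw [Finsupp.single_apply]
  exact Finset.sum_ite_eq' s j b

lemma excessDegree_sum_single_succ (s : Finset σ) (a : σ → ℕ) :
    excessDegree (∑ i ∈ s, Finsupp.single i (a i + 1)) = ∑ i ∈ s, a i := by
  classical
  have hsupp : (∑ i ∈ s, Finsupp.single i (a i + 1)).support = s := by
    ext j
    rw [Finsupp.mem_support_iff, finsetSum_single_apply]
    split_ifs <;> simp_all
  rw [excessDegree, hsupp]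
  exact Finset.sum_congr rfl fun i hi => by
    rw [finsetSum_single_apply, if_pos hi, Nat.add_sub_cancel]

lemma sum_single_pred_succ (m : σ →₀ ℕ) :
    ∑ i ∈ m.support, Finsupp.single i (m i - 1 + 1) = m := by
  classical
  ext j
  rw [finsetSum_single_apply]
  split_ifs with hj
  · exact Nat.sub_add_cancel (Nat.one_le_iff_ne_zero.mpr (Finsupp.mem_support_iff.mp hj))
  · exact (Finsupp.notMem_support_iff.mp hj).symm

lemma setOf_sum_single_succ (P : ℕ → Prop) :
    {e : σ →₀ ℕ | ∃ s : Finset σ, ∃ a : σ → ℕ, P (∑ i ∈ s, a i) ∧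
        e = ∑ i ∈ s, Finsupp.single i (a i + 1)} = {m | P (excessDegree m)} := by
  ext m
  constructor
  · rintro ⟨s, a, hP, rfl⟩
    rwa [Set.mem_ofPred_eq, excessDegree_sum_single_succ]
  · intro hm
    exact ⟨m.support, fun i => m i - 1, hm, (sum_single_pred_succ m).symm⟩

lemma exists_le_excessDegree_eq {m : σ →₀ ℕ} {n : ℕ} (hn : n ≤ excessDegree m) :
    ∃ e ≤ m, excessDegree e = n := by
  classical
  obtain ⟨b, hbc, hb⟩ :=
    Finsupp.exists_le_degree_eq (∑ i ∈ m.support, Finsupp.single i (m i - 1)) n (by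
      rwa [map_sum, Finset.sum_congr rfl fun i _ => Finsupp.degree_single i (m i - 1)])
  have hbm : ∀ i, b i ≤ m i - 1 := fun i => by
    have := hbc i
    rw [finsetSum_single_apply] at this
    split_ifs at this with hi
    · exact this
    · exact this.trans (Nat.zero_le _)
  have hsupp : b.support ⊆ m.support := fun i hi => by
    have := hbm i
    rw [Finsupp.mem_support_iff] at hi ⊢
    omega
  refine ⟨∑ i ∈ m.support, Finsupp.single i (b i + 1), fun j => ?_, ?_⟩
  · rw [finsetSum_single_apply]
    split_ifs with hj
    · have := hbm j
      rw [Finsupp.mem_support_iff] at hj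
      omega
    · exact Nat.zero_le _
  · rw [excessDegree_sum_single_succ, ← hb, Finsupp.degree_apply]
    exact (Finset.sum_subset hsupp fun i _ hi => Finsupp.notMem_support_iff.mp hi).symm

lemma forall_excessDegree_eq_succ_not_le_iff (k : ℕ) (m : σ →₀ ℕ) :
    (∀ e : σ →₀ ℕ, excessDegree e = k + 1 → ¬e ≤ m) ↔ excessDegree m ≤ k := by
  constructor
  · intro h
    by_contra! hk
    obtain ⟨e, hem, he⟩ := exists_le_excessDegree_eq hk
    exact h e he hem
  · rintro hk e he hem
    have := excessDegree_mono hem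
    rw [he] at this
    omega

lemma prod_X_pow_eq_monomial_sum_single (s : Finset σ) (n : σ → ℕ) :
    ∏ i ∈ s, (X i : MvPolynomial σ K) ^ n i =
      monomial (∑ i ∈ s, Finsupp.single i (n i)) 1 := by
  simp_rw [X_pow_eq_monomial]
  exact (monomial_sum_one s _).symm

lemma setOf_prod_X_pow_succ (P : ℕ → Prop) :
    {g : MvPolynomial σ K | ∃ s : Finset σ, ∃ a : σ → ℕ, P (∑ i ∈ s, a i) ∧
        g = ∏ i ∈ s, X i ^ (a i + 1)} =
      (fun m => monomial m (1 : K)) '' {m | P (excessDegree m)} := by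
  simp_rw [← setOf_sum_single_succ, prod_X_pow_eq_monomial_sum_single]
  ext g
  constructor
  · rintro ⟨s, a, hP, rfl⟩
    exact ⟨_, ⟨s, a, hP, rfl⟩, rfl⟩
  · rintro ⟨_, ⟨s, a, hP, rfl⟩, rfl⟩
    exact ⟨s, a, hP, rfl⟩

/-- The kernel of the monomial ideal generated by `∏_{i∈I'} D_i^{a_i+1}` with
`∑_{i∈I'} a_i = k+1` is spanned by the monomials `∏_{i∈I'} t_i^{a_i+1}` with
`∑_{i∈I'} a_i ≤ k`. -/
theorem kernel_of_monomial_ideal (K : Type*) [Field K] [CharZero K] (r k : ℕ) :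
    kernelOf (Ideal.span {g : MvPolynomial (Fin r) K | ∃ I' : Finset (Fin r),
        ∃ a : Fin r → ℕ, (∑ i ∈ I', a i) = k + 1 ∧ g = ∏ i ∈ I', X i ^ (a i + 1)}) =
      ↑(Submodule.span K {f : MvPolynomial (Fin r) K | ∃ I' : Finset (Fin r),
        ∃ a : Fin r → ℕ, (∑ i ∈ I', a i) ≤ k ∧ f = ∏ i ∈ I', X i ^ (a i + 1)}) := by
  rw [setOf_prod_X_pow_succ (· = k + 1), setOf_prod_X_pow_succ (· ≤ k), kernelOf_span_monomial]
  simp_rw [Set.mem_ofPred_eq, forall_excessDegree_eq_succ_not_le_iff]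
end

section
/- In a matroid M on ground set E with an element x, the map C ↦ cl_M(C) is a bijection from the flats of the deletion M\x to the set of flats C of M satisfying C = cl_M(C\{x}), with inverse C ↦ C\{x}. -/
open Matroid Set

variable {α : Type*}

/-- Deletion of a single element: restriction to `M.E \ {x}`. -/
def Matroid.deleteElem' (M : Matroid α) (x : α) : Matroid α := M ↾ (M.E \ {x})

/-- Contraction of a single element, defined by duality: `M/x = (M✶ \ x)✶`. -/
def Matroid.contractElem' (M : Matroid α) (x : α) : Matroid α := (M✶.deleteElem' x)✶

namespace Matroid

lemma isFlat_restrict_iff {M : Matroid α} {R F : Set α} (hR : R ⊆ M.E) :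
    (M ↾ R).IsFlat F ↔ M.closure F ∩ R = F := by
  rw [isFlat_iff_closure_eq, restrict_closure_eq', sdiff_eq_empty.mpr hR, union_empty]
  refine ⟨fun h ↦ ?_, fun h ↦ ?_⟩ <;>
  rwa [inter_eq_self_of_subset_left (h ▸ inter_subset_right : F ⊆ R)] at *

lemma isFlat_deleteElem'_iff {M : Matroid α} {x : α} {F : Set α} :
    (M.deleteElem' x).IsFlat F ↔ M.closure F \ {x} = F := by
  rw [deleteElem', isFlat_restrict_iff sdiff_subset, ← inter_sdiff_assoc,
    inter_eq_self_of_subset_left (M.closure_subset_ground F)]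

end Matroid

/-- `C ↦ cl_M(C)` is a bijection from the flats of the deletion `M \ x` onto the flats
`C` of `M` with `C = cl_M(C \ {x})`, with inverse `C ↦ C \ {x}`. -/
theorem delete_flats_bijOn (M : Matroid α) (x : α) :
    Set.BijOn M.closure {F | (M.deleteElem' x).IsFlat F}
        {C | M.IsFlat C ∧ C = M.closure (C \ {x})} ∧
      (∀ F, (M.deleteElem' x).IsFlat F → M.closure F \ {x} = F) := by
  have left_inv : LeftInvOn (· \ {x}) M.closure {F | (M.deleteElem' x).IsFlat F} :=
    fun _ hF ↦ isFlat_deleteElem'_iff.1 hF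
  have right_inv : RightInvOn (· \ {x}) M.closure {C | M.IsFlat C ∧ C = M.closure (C \ {x})} :=
    fun _ hC ↦ hC.2.symm
  have maps_to : MapsTo M.closure {F | (M.deleteElem' x).IsFlat F}
      {C | M.IsFlat C ∧ C = M.closure (C \ {x})} :=
    fun F hF ↦ ⟨M.isFlat_closure F, (congrArg M.closure (left_inv hF)).symm⟩
  have maps_from : MapsTo (· \ {x}) {C | M.IsFlat C ∧ C = M.closure (C \ {x})}
      {F | (M.deleteElem' x).IsFlat F} :=
    fun C hC ↦ isFlat_deleteElem'_iff.2 (by rw [← hC.2])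
  exact ⟨InvOn.bijOn ⟨left_inv, right_inv⟩ maps_to maps_from, fun _ hF ↦ left_inv hF⟩
end

section
/- If J is an upper set in the lattice of flats of a matroid M and x ∈ E, then J\x := {C\{x} : C ∈ J and C = cl(C\{x})} is an upper set in the lattice of flats of the deletion M\x. -/
open Matroid Set

variable {α : Type*}

/-- The deletion `J\x = {C \ {x} : C ∈ J, C = cl(C \ {x})}` of an upper set `J` in the
lattice of flats of `M`. -/
def delUpperSet (M : Matroid α) (J : Set (Set α)) (x : α) : Set (Set α) :=
  {F | ∃ C ∈ J, C = M.closure (C \ {x}) ∧ F = C \ {x}}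

/-! Flats of a restriction `M ↾ R` are the traces `F ∩ R` of flats `F` of `M`, and a flat `F'`
of `M ↾ R` is the trace of `cl_M(F')`. A set `C = cl_M(C \ {x})` is a flat, so its trace
`C \ {x}` is a flat of `M\x`; and a flat `F' ⊇ C \ {x}` of `M\x` is the trace of
`cl_M(F') ⊇ cl_M(C \ {x}) = C`, a flat above `C`, hence in `J`. -/

namespace Matroid

variable {M : Matroid α} {C F R : Set α}

lemma IsFlat.inter_isFlat_restrict (hF : M.IsFlat F) (hR : R ⊆ M.E) :
    (M ↾ R).IsFlat (F ∩ R) := by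
  rw [isFlat_iff_closure_eq, restrict_closure_eq M inter_subset_right hR]
  refine subset_antisymm (inter_subset_inter_left R ?_) (subset_inter ?_ inter_subset_right)
  · exact (M.closure_subset_closure inter_subset_left).trans hF.closure.subset
  · exact M.subset_closure (F ∩ R) (inter_subset_right.trans hR)

lemma closure_inter_eq_of_isFlat_restrict (hF : (M ↾ R).IsFlat F) (hR : R ⊆ M.E) :
    M.closure F ∩ R = F := by
  have hFR : F ⊆ R := hF.subset_ground
  rw [← restrict_closure_eq M hFR hR, hF.closure]

lemma diff_singleton_eq_inter_deleteElem'_ground (hC : C ⊆ M.E) (x : α) :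
    C \ {x} = C ∩ (M.deleteElem' x).E := by
  rw [deleteElem', restrict_ground_eq, ← inter_sdiff_assoc, inter_eq_self_of_subset_left hC]

lemma IsFlat.diff_singleton_isFlat_deleteElem' (hC : M.IsFlat C) (x : α) :
    (M.deleteElem' x).IsFlat (C \ {x}) := by
  rw [diff_singleton_eq_inter_deleteElem'_ground hC.subset_ground]
  exact hC.inter_isFlat_restrict sdiff_subset

lemma closure_diff_singleton_eq_of_isFlat_deleteElem' {x : α} (hF : (M.deleteElem' x).IsFlat F) :
    M.closure F \ {x} = F := by
  rw [diff_singleton_eq_inter_deleteElem'_ground (M.closure_subset_ground F)]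
  exact closure_inter_eq_of_isFlat_restrict hF sdiff_subset

end Matroid

theorem delUpperSet_isUpperSet_general (M : Matroid α) (x : α)
    (J : Set (Set α))
    (hJup : ∀ C ∈ J, ∀ C', M.IsFlat C' → C ⊆ C' → C' ∈ J) :
    (∀ F ∈ delUpperSet M J x, (M.deleteElem' x).IsFlat F) ∧
      (∀ F ∈ delUpperSet M J x, ∀ F', (M.deleteElem' x).IsFlat F' → F ⊆ F' →
        F' ∈ delUpperSet M J x) := by
  constructor
  · rintro _ ⟨C, -, hC, rfl⟩
    have hCflat : M.IsFlat C := hC ▸ M.isFlat_closure (C \ {x})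
    exact hCflat.diff_singleton_isFlat_deleteElem' x
  · rintro _ ⟨C, hCJ, hC, rfl⟩ F hF hCF
    have hFcl := closure_diff_singleton_eq_of_isFlat_deleteElem' hF
    have hCsub : C ⊆ M.closure F := hC ▸ M.closure_subset_closure hCF
    exact ⟨M.closure F, hJup C hCJ _ (M.isFlat_closure F) hCsub, by rw [hFcl], hFcl.symm⟩

/-- If `J` is an upper set in the lattice of flats of `M`, then `J\x` is an upper set in
the lattice of flats of the deletion `M\x`. -/
theorem delUpperSet_isUpperSet (M : Matroid α) (x : α)
    (J : Set (Set α)) (hJflat : ∀ C ∈ J, M.IsFlat C)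
    (hJup : ∀ C ∈ J, ∀ C', M.IsFlat C' → C ⊆ C' → C' ∈ J) :
    (∀ F ∈ delUpperSet M J x, (M.deleteElem' x).IsFlat F) ∧
      (∀ F ∈ delUpperSet M J x, ∀ F', (M.deleteElem' x).IsFlat F' → F ⊆ F' →
        F' ∈ delUpperSet M J x) :=
  delUpperSet_isUpperSet_general M x J hJup
end
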